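/- arXiv:2412.03450 — 6 statements merged into one kernel-verified Lean document; each statement's English description precedes it below -/
import Mathlib

section
/- E[ Z^{−α} ] = (c·Γ(1+α)·Γ(1−α))^{−1}. -/
open MeasureTheory ProbabilityTheory Real Set

/-!
Since `Γ(a) z^{-a} = ∫₀^∞ s^{a-1} e^{-sz} ds` for `z > 0`, Tonelli turns the negative moment
`Γ(α) E[Z^{-α}]` into `∫₀^∞ s^{α-1} E[e^{-sZ}] ds = ∫₀^∞ s^{α-1} e^{-K s^α} ds = 1 / (K α)`,
where `K = c Γ(1-α)`; finally `α Γ(α) = Γ(1+α)`.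
-/

lemma lintegral_ofReal_eq_ofReal_of_integral_eq {α : Type*} [MeasurableSpace α] {μ : Measure α}
    {f : α → ℝ} {v : ℝ} (hf : 0 ≤ᵐ[μ] f) (h : ∫ x, f x ∂μ = v) (hv : v ≠ 0) :
    ∫⁻ x, ENNReal.ofReal (f x) ∂μ = ENNReal.ofReal v := by
  rw [← h, ofReal_integral_eq_lintegral_ofReal (.of_integral_ne_zero (h ▸ hv)) hf]

lemma lintegral_rpow_sub_one_mul_exp_neg_mul_Ioi {a z : ℝ} (ha : 0 < a) (hz : 0 < z) :
    ∫⁻ s in Ioi 0, ENNReal.ofReal (s ^ (a - 1) * exp (-(s * z)))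
      = ENNReal.ofReal (Gamma a * z ^ (-a)) := by
  refine lintegral_ofReal_eq_ofReal_of_integral_eq ?_ ?_ (by positivity)
  · filter_upwards [self_mem_ae_restrict measurableSet_Ioi] with s (hs : 0 < s)
    positivity
  · simp_rw [mul_comm _ z]
    rw [integral_rpow_mul_exp_neg_mul_Ioi ha hz, one_div, inv_rpow hz.le, ← rpow_neg hz.le,
      mul_comm]

lemma lintegral_rpow_sub_one_mul_exp_neg_mul_rpow_Ioi {a K : ℝ} (ha : 0 < a) (hK : 0 < K) :
    ∫⁻ s in Ioi 0, ENNReal.ofReal (s ^ (a - 1) * exp (-(K * s ^ a)))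
      = ENNReal.ofReal (K * a)⁻¹ := by
  refine lintegral_ofReal_eq_ofReal_of_integral_eq ?_ ?_ (by positivity)
  · filter_upwards [self_mem_ae_restrict measurableSet_Ioi] with s (hs : 0 < s)
    positivity
  · have h := integral_rpow_mul_exp_neg_mul_rpow ha (q := a - 1) (by linarith) hK
    rw [sub_add_cancel, div_self ha.ne', neg_div, div_self ha.ne', Gamma_one, rpow_neg_one]
      at h
    simp_rw [neg_mul] at h
    rw [h, mul_inv]
    ring

theorem ofReal_Gamma_mul_lintegral_rpow_neg {Ω : Type*} [MeasurableSpace Ω] {μ : Measure Ω}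
    [SFinite μ] {Z : Ω → ℝ} (hZ : Measurable Z) (hZpos : ∀ᵐ ω ∂μ, 0 < Z ω) {a : ℝ}
    (ha : 0 < a) :
    ENNReal.ofReal (Gamma a) * ∫⁻ ω, ENNReal.ofReal (Z ω ^ (-a)) ∂μ
      = ∫⁻ s in Ioi 0, ENNReal.ofReal (s ^ (a - 1))
          * ∫⁻ ω, ENNReal.ofReal (exp (-(s * Z ω))) ∂μ := by
  have hmeas : Measurable fun p : Ω × ℝ ↦ p.2 ^ (a - 1) * exp (-(p.2 * Z p.1)) := by fun_prop
  calc ENNReal.ofReal (Gamma a) * ∫⁻ ω, ENNReal.ofReal (Z ω ^ (-a)) ∂μ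
      = ∫⁻ ω, (∫⁻ s in Ioi 0, ENNReal.ofReal (s ^ (a - 1) * exp (-(s * Z ω)))) ∂μ := by
        rw [← lintegral_const_mul _ (by fun_prop)]
        refine lintegral_congr_ae ?_
        filter_upwards [hZpos] with ω hω
        rw [lintegral_rpow_sub_one_mul_exp_neg_mul_Ioi ha hω,
          ENNReal.ofReal_mul (Gamma_pos_of_pos ha).le]
    _ = ∫⁻ s in Ioi 0, ∫⁻ ω, ENNReal.ofReal (s ^ (a - 1) * exp (-(s * Z ω))) ∂μ :=
        lintegral_lintegral_swap hmeas.ennreal_ofReal.aemeasurable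
    _ = _ := by
        refine setLIntegral_congr_fun measurableSet_Ioi fun s (hs : 0 < s) ↦ ?_
        rw [← lintegral_const_mul _ (by fun_prop)]
        refine lintegral_congr fun ω ↦ ?_
        rw [ENNReal.ofReal_mul (by positivity)]

theorem stable_negative_moment
    {Ω : Type*} [MeasureSpace Ω] [IsProbabilityMeasure (ℙ : Measure Ω)]
    (α c : ℝ) (hα : α ∈ Set.Ioo (0:ℝ) 1) (hc : 0 < c)
    (Z : Ω → ℝ) (hZmeas : Measurable Z) (hZpos : ∀ ω, 0 < Z ω)
    (hZlaplace : ∀ s ≥ (0:ℝ),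
      ∫ ω, Real.exp (-(s * Z ω)) = Real.exp (-(c * Real.Gamma (1 - α) * s ^ α))) :
    ∫ ω, (Z ω) ^ (-α) = (c * Real.Gamma (1 + α) * Real.Gamma (1 - α))⁻¹ := by
  obtain ⟨hα0, hα1⟩ := hα
  have hK : 0 < c * Gamma (1 - α) := mul_pos hc (Gamma_pos_of_pos (by linarith))
  have hlaplace : ∀ s ∈ Ioi (0 : ℝ), ∫⁻ ω, ENNReal.ofReal (exp (-(s * Z ω)))
      = ENNReal.ofReal (exp (-(c * Gamma (1 - α) * s ^ α))) := fun s hs ↦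
    lintegral_ofReal_eq_ofReal_of_integral_eq (ae_of_all _ fun _ ↦ (exp_pos _).le)
      (hZlaplace s (le_of_lt hs)) (exp_pos _).ne'
  have hmoment : ENNReal.ofReal (Gamma α) * ∫⁻ ω, ENNReal.ofReal (Z ω ^ (-α))
      = ENNReal.ofReal (c * Gamma (1 - α) * α)⁻¹ := by
    rw [ofReal_Gamma_mul_lintegral_rpow_neg hZmeas (ae_of_all _ hZpos) hα0,
      ← lintegral_rpow_sub_one_mul_exp_neg_mul_rpow_Ioi hα0 hK]
    refine setLIntegral_congr_fun measurableSet_Ioi fun s (hs : 0 < s) ↦ ?_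
    rw [hlaplace s hs, ← ENNReal.ofReal_mul (by positivity)]
  have hΓ : 0 < Gamma α := Gamma_pos_of_pos hα0
  have hreal := congrArg ENNReal.toReal hmoment
  rw [ENNReal.toReal_mul, ENNReal.toReal_ofReal hΓ.le, ENNReal.toReal_ofReal (by positivity),
    mul_comm] at hreal
  rw [integral_eq_lintegral_of_nonneg_ae (ae_of_all _ fun ω ↦ rpow_nonneg (hZpos ω).le _)
    (hZmeas.pow_const _).aestronglyMeasurable, eq_div_of_mul_eq hΓ.ne' hreal, add_comm,
    Gamma_add_one hα0.ne']
  ring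
end

section
/- For all real x,y ≥ 0, Γ(x+1+y)/Γ(x+1) ≤ (11/10)·(x+1+y)^y. -/
open Real

lemma gamma_aux (n : ℕ) : ∀ s y : ℝ, 1 ≤ s → 0 ≤ y → y ≤ n →
    Real.Gamma (s + y) ≤ Real.Gamma s * (s + y) ^ y := by
  induction n with
  | zero =>
    intro s y hs hy hyn
    have : y = 0 := le_antisymm (by exact_mod_cast hyn) hy
    subst this
    simp
  | succ n ih =>
    intro s y hs hy hyn
    have hs0 : 0 < s := lt_of_lt_of_le one_pos hs
    have hsy : 0 < s + y := by linarith
    rcases le_or_gt y n with h | h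
    · exact ih s y hs hy h
    · rcases le_or_gt y 1 with h1 | h1
      · rcases eq_or_lt_of_le h1 with rfl | h1'
        · rw [Real.Gamma_add_one hs0.ne', Real.rpow_one]
          have := Real.Gamma_pos_of_pos hs0
          nlinarith
        · -- 0 < y < 1 : use log-convexity
          have hy0 : 0 < y := lt_of_le_of_lt (by positivity : (0:ℝ) ≤ n) h
          have ha : 0 < 1 - y := by linarith
          have key := Real.Gamma_mul_add_mul_le_rpow_Gamma_mul_rpow_Gamma
            hs0 (by linarith : (0:ℝ) < s + 1) ha hy0 (by ring)
          have e1 : (1 - y) * s + y * (s + 1) = s + y := by ring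
          rw [e1] at key
          have e2 : Real.Gamma s ^ (1 - y) * Real.Gamma (s + 1) ^ y
              = Real.Gamma s * s ^ y := by
            rw [Real.Gamma_add_one hs0.ne',
              Real.mul_rpow hs0.le (Real.Gamma_pos_of_pos hs0).le]
            have : Real.Gamma s ^ (1 - y) * (s ^ y * Real.Gamma s ^ y)
                = Real.Gamma s ^ (1 - y) * Real.Gamma s ^ y * s ^ y := by ring
            rw [this, ← Real.rpow_add (Real.Gamma_pos_of_pos hs0),
              sub_add_cancel, Real.rpow_one]
          rw [e2] at key
          refine key.trans ?_
          exact mul_le_mul_of_nonneg_left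
            (Real.rpow_le_rpow hs0.le (by linarith) hy0.le)
            (Real.Gamma_pos_of_pos hs0).le
      · -- y > 1 : peel off one
        have hy1 : 0 ≤ y - 1 := by linarith
        have hsy1 : 0 < s + (y - 1) := by linarith
        have := ih s (y - 1) hs hy1 (by push_cast at hyn ⊢; linarith)
        have e1 : s + y = (s + (y - 1)) + 1 := by ring
        rw [e1, Real.Gamma_add_one hsy1.ne']
        calc (s + (y - 1)) * Real.Gamma (s + (y - 1))
            ≤ (s + (y - 1)) * (Real.Gamma s * (s + (y - 1)) ^ (y - 1)) := by
              exact mul_le_mul_of_nonneg_left this hsy1.le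
          _ = Real.Gamma s * (s + (y - 1)) ^ y := by
              have e3 : (s + (y - 1)) ^ y
                  = (s + (y - 1)) * (s + (y - 1)) ^ (y - 1) := by
                rw [Real.rpow_sub hsy1, Real.rpow_one]
                field_simp
              rw [e3]; ring
          _ ≤ Real.Gamma s * ((s + (y - 1)) + 1) ^ y := by
              exact mul_le_mul_of_nonneg_left
                (Real.rpow_le_rpow hsy1.le (by linarith) (by linarith))
                (Real.Gamma_pos_of_pos hs0).le

theorem gamma_ratio_bound (x y : ℝ) (hx : 0 ≤ x) (hy : 0 ≤ y) :
    Real.Gamma (x + 1 + y) / Real.Gamma (x + 1) ≤ 11 / 10 * (x + 1 + y) ^ y := by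
  have hG : 0 < Real.Gamma (x + 1) := Real.Gamma_pos_of_pos (by linarith)
  rw [div_le_iff₀ hG]
  have key := gamma_aux ⌈y⌉₊ (x + 1) y (by linarith) hy (Nat.le_ceil y)
  have hpow : 0 ≤ (x + 1 + y) ^ y := Real.rpow_nonneg (by linarith) y
  nlinarith [key, hG, hpow]
end

section
/- E[ exp(−s·Z·X^{1/α}) ] = (1 + (c/κ)·Γ(1−α)·s^α)^{−κ} for all s≥0. -/
/-!
Conditionally on `X = x`, the variable `Z x^{1/α}` is again positive α-stable with Laplace
transform `exp(-c Γ(1-α) s^α x)`, by the scaling `(s x^{1/α})^α = s^α x`.  Integrating this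
against the law of `X` turns the left side into the Laplace transform of `Γ(κ, κ)` at
`c Γ(1-α) s^α`, which is `(1 + c Γ(1-α) s^α / κ)^{-κ}`.
-/

open MeasureTheory ProbabilityTheory Real Set

lemma ae_nonneg_gammaMeasure (a r : ℝ) : ∀ᵐ x ∂gammaMeasure a r, 0 ≤ x :=
  (ae_withDensity_iff (measurable_gammaPDFReal a r).ennreal_ofReal).mpr <|
    ae_of_all _ fun _ hx ↦ not_lt.mp fun hneg ↦ hx (gammaPDF_of_neg hneg)

lemma integral_exp_neg_mul_gammaMeasure {a r l : ℝ} (ha : 0 < a) (hr : 0 < r) (hl : -r < l) :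
    ∫ x, exp (-(l * x)) ∂gammaMeasure a r = (1 + l / r) ^ (-a) := by
  have hrl : 0 < r + l := by linarith
  have hdensity : ∀ x, (gammaPDF a r x).toReal • exp (-(l * x))
      = (Ici 0).indicator (fun x ↦ r ^ a / Gamma a * (x ^ (a - 1) * exp (-((r + l) * x)))) x := by
    intro x
    rw [gammaPDF, ENNReal.toReal_ofReal (gammaPDFReal_nonneg ha hr x), smul_eq_mul]
    by_cases hx : 0 ≤ x
    · rw [indicator_of_mem (mem_Ici.mpr hx), gammaPDFReal, if_pos hx, mul_assoc, mul_assoc,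
        ← exp_add]
      ring_nf
    · rw [indicator_of_notMem (by simpa using hx), gammaPDFReal, if_neg hx, zero_mul]
  calc ∫ x, exp (-(l * x)) ∂gammaMeasure a r
      = r ^ a / Gamma a * ((1 / (r + l)) ^ a * Gamma a) := by
        rw [gammaMeasure, integral_withDensity_eq_integral_toReal_smul (f := gammaPDF a r)
          (measurable_gammaPDFReal a r).ennreal_ofReal
          (ae_of_all _ fun _ ↦ ENNReal.ofReal_lt_top)]
        simp_rw [hdensity]
        rw [integral_indicator measurableSet_Ici, integral_Ici_eq_integral_Ioi,
          integral_const_mul, integral_rpow_mul_exp_neg_mul_Ioi ha hrl]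
    _ = (r / (r + l)) ^ a := by
        rw [div_rpow hr.le hrl.le, div_rpow zero_le_one hrl.le, one_rpow]
        field_simp
    _ = (1 + l / r) ^ (-a) := by
        have hpos : 0 < 1 + l / r := by rw [one_add_div hr.ne']; exact div_pos hrl hr
        rw [rpow_neg hpos.le, ← inv_rpow hpos.le]
        congr 1
        field_simp

theorem ProbabilityTheory.IndepFun.integral_comp_eq_integral_integral_map {Ω β γ E : Type*}
    {mΩ : MeasurableSpace Ω} {μ : Measure Ω} [IsFiniteMeasure μ]
    [MeasurableSpace β] [MeasurableSpace γ] [NormedAddCommGroup E] [NormedSpace ℝ E]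
    {Y : Ω → β} {X : Ω → γ} (hY : AEMeasurable Y μ) (hX : AEMeasurable X μ)
    (hindep : IndepFun Y X μ)
    {f : β × γ → E} (hf : StronglyMeasurable f)
    (hint : Integrable (fun ω ↦ f (Y ω, X ω)) μ) :
    ∫ ω, f (Y ω, X ω) ∂μ = ∫ x, ∫ ω, f (Y ω, x) ∂μ ∂μ.map X := by
  have hmap : μ.map (fun ω ↦ (Y ω, X ω)) = (μ.map Y).prod (μ.map X) :=
    (indepFun_iff_map_prod_eq_prod_map_map hY hX).mp hindep
  have hint_prod : Integrable f ((μ.map Y).prod (μ.map X)) := by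
    rw [← hmap]
    exact (integrable_map_measure hf.aestronglyMeasurable (hY.prodMk hX)).mpr hint
  calc ∫ ω, f (Y ω, X ω) ∂μ = ∫ p, f p ∂(μ.map Y).prod (μ.map X) := by
        rw [← hmap, integral_map (hY.prodMk hX) hf.aestronglyMeasurable]
    _ = ∫ x, ∫ y, f (y, x) ∂μ.map Y ∂μ.map X := integral_prod_symm f hint_prod
    _ = ∫ x, ∫ ω, f (Y ω, x) ∂μ ∂μ.map X := by
        congr with x
        exact integral_map hY
          (hf.comp_measurable measurable_prodMk_right).aestronglyMeasurable

lemma integral_exp_neg_mul_mul_rpow_one_div {Ω : Type*} {mΩ : MeasurableSpace Ω}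
    {μ : Measure Ω} {Z : Ω → ℝ} {α b : ℝ} (hα : α ≠ 0)
    (hZ : ∀ s ≥ (0 : ℝ), ∫ ω, exp (-(s * Z ω)) ∂μ = exp (-(b * s ^ α)))
    {s x : ℝ} (hs : 0 ≤ s) (hx : 0 ≤ x) :
    ∫ ω, exp (-(s * (Z ω * x ^ (1 / α)))) ∂μ = exp (-(b * s ^ α * x)) := by
  have hscale : (s * x ^ (1 / α)) ^ α = s ^ α * x := by
    rw [mul_rpow hs (rpow_nonneg hx _), ← rpow_mul hx, one_div_mul_cancel hα, rpow_one]
  calc ∫ ω, exp (-(s * (Z ω * x ^ (1 / α)))) ∂μ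
      = ∫ ω, exp (-(s * x ^ (1 / α) * Z ω)) ∂μ := by simp_rw [mul_comm (Z _), mul_assoc]
    _ = exp (-(b * s ^ α * x)) := by
        rw [hZ _ (by positivity), hscale, mul_assoc]

theorem laplace_stable_gamma_mixture
    {Ω : Type*} [MeasureSpace Ω] [IsProbabilityMeasure (ℙ : Measure Ω)]
    (α c κ : ℝ) (hα : α ∈ Set.Ioo (0:ℝ) 1) (hc : 0 < c) (hκ : 0 < κ)
    (Z : Ω → ℝ) (hZmeas : Measurable Z) (hZpos : ∀ ω, 0 < Z ω)
    (hZlaplace : ∀ s ≥ (0:ℝ),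
      ∫ ω, Real.exp (-(s * Z ω)) = Real.exp (-(c * Real.Gamma (1 - α) * s ^ α)))
    (X : Ω → ℝ) (hXmeas : Measurable X)
    (hXdist : Measure.map X ℙ = ProbabilityTheory.gammaMeasure κ κ)
    (hindep : IndepFun Z X ℙ) :
    ∀ s ≥ (0:ℝ),
      ∫ ω, Real.exp (-(s * (Z ω * X ω ^ (1 / α))))
        = (1 + (c / κ) * Real.Gamma (1 - α) * s ^ α) ^ (-κ) := by
  intro s hs
  obtain ⟨hα0, hα1⟩ := hα
  have hl : 0 ≤ c * Gamma (1 - α) * s ^ α := by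
    have := Gamma_pos_of_pos (sub_pos.mpr hα1)
    positivity
  have hX_nonneg : ∀ᵐ ω, 0 ≤ X ω :=
    ae_of_ae_map hXmeas.aemeasurable (hXdist ▸ ae_nonneg_gammaMeasure κ κ)
  have hint : Integrable (fun ω ↦ exp (-(s * (Z ω * X ω ^ (1 / α))))) := by
    refine (integrable_const 1).mono' (by fun_prop) ?_
    filter_upwards [hX_nonneg] with ω hω
    have := hZpos ω
    rw [norm_eq_abs, abs_exp, exp_le_one_iff, neg_nonpos]
    positivity
  rw [hindep.integral_comp_eq_integral_integral_map hZmeas.aemeasurable hXmeas.aemeasurable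
    (f := fun p ↦ exp (-(s * (p.1 * p.2 ^ (1 / α))))) (by fun_prop) hint, hXdist]
  calc ∫ x, (∫ ω, exp (-(s * (Z ω * x ^ (1 / α))))) ∂gammaMeasure κ κ
      = ∫ x, exp (-(c * Gamma (1 - α) * s ^ α * x)) ∂gammaMeasure κ κ :=
        integral_congr_ae <| (ae_nonneg_gammaMeasure κ κ).mono fun _ hx ↦
          integral_exp_neg_mul_mul_rpow_one_div hα0.ne' hZlaplace hs hx
    _ = (1 + (c / κ) * Gamma (1 - α) * s ^ α) ^ (-κ) := by
        rw [integral_exp_neg_mul_gammaMeasure hκ hκ (by linarith)]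
        ring_nf
end

section
/- Let 0≤β<α<1 and C,D>0. For every t≥0 and every positive integer j satisfying 2DΓ(β+1)·j·(α(j−1)+β+1)^{α−β} ≤ CΓ(α+1)·t^{α−β}, one has ∑_{i=0}^{j−1} C(j,i) · (Γ(α+1))^i (Γ(β+1))^{j−i} / Γ(αi+β(j−i)+1) · (C t^α)^i (D t^β)^{j−i} ≤ (21/10) · D C^{j−1} j · (Γ(α+1))^{j−1} Γ(β+1) / Γ(α(j−1)+β+1) · t^{α(j−1)+β}, where C(j,i) denotes the binomial coefficient. -/
/-- Summand auxiliary function. -/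
noncomputable def auxSummand (C D α β t : ℝ) (j i : ℕ) : ℝ :=
  (j.choose i : ℝ) *
    ((Real.Gamma (α + 1)) ^ i * (Real.Gamma (β + 1)) ^ (j - i)
      / Real.Gamma (α * i + β * ((j : ℝ) - i) + 1)) *
    (C * t ^ α) ^ i * (D * t ^ β) ^ (j - i)

lemma auxSummand_def (C D α β t : ℝ) (j i : ℕ) :
    auxSummand C D α β t j i = (j.choose i : ℝ) *
      ((Real.Gamma (α + 1)) ^ i * (Real.Gamma (β + 1)) ^ (j - i)
        / Real.Gamma (α * i + β * ((j : ℝ) - i) + 1)) *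
      (C * t ^ α) ^ i * (D * t ^ β) ^ (j - i) := rfl

/-- Gautschi-type bound from log-convexity. -/
lemma gamma_add_le_aux (x s : ℝ) (hx : 0 < x) (hs : 0 < s) (hs1 : s < 1) :
    Real.Gamma (x + s) ≤ Real.Gamma x * x ^ s := by
  have hΓ := Real.Gamma_pos_of_pos hx
  have h := Real.Gamma_mul_add_mul_le_rpow_Gamma_mul_rpow_Gamma hx
    (by linarith : (0:ℝ) < x + 1) (by linarith : (0:ℝ) < 1 - s) hs (by ring)
  rw [show (1 - s) * x + s * (x + 1) = x + s by ring] at h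
  calc Real.Gamma (x + s) ≤ Real.Gamma x ^ (1 - s) * Real.Gamma (x + 1) ^ s := h
    _ = Real.Gamma x * x ^ s := by
        rw [Real.Gamma_add_one hx.ne', Real.mul_rpow hx.le hΓ.le]
        rw [show Real.Gamma x ^ (1 - s) * (x ^ s * Real.Gamma x ^ s)
            = (Real.Gamma x ^ (1 - s) * Real.Gamma x ^ s) * x ^ s by ring,
          ← Real.rpow_add hΓ]
        norm_num

/- For 0 ≤ β < α < 1, C, D > 0, t ≥ 0 and a positive integer j with
2DΓ(β+1) j (α(j−1)+β+1)^{α−β} ≤ CΓ(α+1) t^{α−β}, one has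
∑_{i=0}^{j−1} C(j,i) Γ(α+1)^i Γ(β+1)^{j−i} / Γ(αi+β(j−i)+1) (C t^α)^i (D t^β)^{j−i}
  ≤ (21/10) D C^{j−1} j Γ(α+1)^{j−1} Γ(β+1) / Γ(α(j−1)+β+1) · t^{α(j−1)+β}. -/
theorem lemma_import
    (C D α β : ℝ) (hC : 0 < C) (hD : 0 < D)
    (hβ : 0 ≤ β) (hβα : β < α) (hα1 : α < 1)
    (t : ℝ) (ht : 0 ≤ t) (j : ℕ) (hj : 1 ≤ j)
    (hcond : 2 * D * Real.Gamma (β + 1) * j * (α * ((j : ℝ) - 1) + β + 1) ^ (α - β)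
      ≤ C * Real.Gamma (α + 1) * t ^ (α - β)) :
    ∑ i ∈ Finset.range j, (j.choose i : ℝ) *
        ((Real.Gamma (α + 1)) ^ i * (Real.Gamma (β + 1)) ^ (j - i)
          / Real.Gamma (α * i + β * ((j : ℝ) - i) + 1)) *
        (C * t ^ α) ^ i * (D * t ^ β) ^ (j - i)
      ≤ 21 / 10 * D * C ^ (j - 1) * j *
          ((Real.Gamma (α + 1)) ^ (j - 1) * Real.Gamma (β + 1)
            / Real.Gamma (α * ((j : ℝ) - 1) + β + 1)) *
          t ^ (α * ((j : ℝ) - 1) + β) := by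
  have hΓα : 0 < Real.Gamma (α + 1) := Real.Gamma_pos_of_pos (by linarith)
  have hΓβ : 0 < Real.Gamma (β + 1) := Real.Gamma_pos_of_pos (by linarith)
  have hj' : (1:ℝ) ≤ (j:ℝ) := by exact_mod_cast hj
  have hα0 : 0 < α := lt_of_le_of_lt hβ hβα
  have hX : 0 < α * ((j:ℝ) - 1) + β + 1 := by nlinarith
  -- t is positive
  have ht0 : 0 < t := by
    rcases ht.lt_or_eq with h | h
    · exact h
    · exfalso
      rw [← h, Real.zero_rpow (by linarith : α - β ≠ 0), mul_zero] at hcond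
      have h1 : 0 < 2 * D * Real.Gamma (β + 1) * (j:ℝ) := by positivity
      have h2 : 0 < (α * ((j:ℝ) - 1) + β + 1) ^ (α - β) := Real.rpow_pos_of_pos hX _
      nlinarith
  -- positivity of Gamma arguments
  have hGpos : ∀ i : ℕ, i ≤ j → 0 < Real.Gamma (α * i + β * ((j : ℝ) - i) + 1) := by
    intro i hi
    apply Real.Gamma_pos_of_pos
    have h1 : (0:ℝ) ≤ α * i := by positivity
    have h2 : (0:ℝ) ≤ β * ((j:ℝ) - i) := by
      apply mul_nonneg hβ
      have : (i:ℝ) ≤ (j:ℝ) := by exact_mod_cast hi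
      linarith
    linarith
  have htα : t ^ α = t ^ β * t ^ (α - β) := by
    rw [← Real.rpow_add ht0, show β + (α - β) = α by ring]
  -- key ratio step
  have key : ∀ i : ℕ, i + 1 < j → 2 * auxSummand C D α β t j i ≤ auxSummand C D α β t j (i + 1) := by
    intro i hij
    have hij1 : (i:ℝ) + 1 < (j:ℝ) := by exact_mod_cast hij
    have hGi := hGpos i (by omega)
    have hGi1 := hGpos (i+1) (by omega)
    -- Gamma ratio bound
    have harg : α * ((i:ℕ)+1 : ℕ) + β * ((j : ℝ) - ((i:ℕ)+1 : ℕ)) + 1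
        = (α * i + β * ((j : ℝ) - i) + 1) + (α - β) := by push_cast; ring
    have hxpos : 0 < α * (i:ℝ) + β * ((j : ℝ) - i) + 1 := by
      have h1 : (0:ℝ) ≤ α * i := by positivity
      have h2 : (0:ℝ) ≤ β * ((j:ℝ) - i) := mul_nonneg hβ (by linarith)
      linarith
    have hxX : α * (i:ℝ) + β * ((j : ℝ) - i) + 1 ≤ α * ((j:ℝ) - 1) + β + 1 := by
      nlinarith [mul_nonneg (by linarith : (0:ℝ) ≤ α - β) (by linarith : (0:ℝ) ≤ (j:ℝ) - 1 - i)]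
    have hG : Real.Gamma (α * ((i:ℕ)+1 : ℕ) + β * ((j : ℝ) - ((i:ℕ)+1 : ℕ)) + 1)
        ≤ Real.Gamma (α * i + β * ((j : ℝ) - i) + 1) * (α * ((j:ℝ) - 1) + β + 1) ^ (α - β) := by
      rw [harg]
      calc Real.Gamma ((α * i + β * ((j : ℝ) - i) + 1) + (α - β))
          ≤ Real.Gamma (α * i + β * ((j : ℝ) - i) + 1)
            * (α * i + β * ((j : ℝ) - i) + 1) ^ (α - β) :=
            gamma_add_le_aux _ _ hxpos (by linarith) (by linarith)
        _ ≤ Real.Gamma (α * i + β * ((j : ℝ) - i) + 1)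
            * (α * ((j:ℝ) - 1) + β + 1) ^ (α - β) := by
            apply mul_le_mul_of_nonneg_left _ hGi.le
            exact Real.rpow_le_rpow hxpos.le hxX (by linarith)
    -- binomial bound
    have hchoose : (j.choose i : ℝ) ≤ (j:ℝ) * (j.choose (i+1) : ℝ) := by
      have hnat : j.choose i ≤ j * j.choose (i+1) := by
        calc j.choose i ≤ j.choose i * (j - i) :=
              Nat.le_mul_of_pos_right _ (by omega)
          _ = j.choose (i+1) * (i+1) := (Nat.choose_succ_right_eq j i).symm
          _ ≤ j.choose (i+1) * j := Nat.mul_le_mul_left _ (by omega)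
          _ = j * j.choose (i+1) := Nat.mul_comm _ _
      exact_mod_cast hnat
    -- core inequality
    have hcore : 2 * (j.choose i : ℝ) * Real.Gamma (β+1) * (D * t ^ β)
          * Real.Gamma (α * ((i:ℕ)+1 : ℕ) + β * ((j : ℝ) - ((i:ℕ)+1 : ℕ)) + 1)
        ≤ (j.choose (i+1) : ℝ) * Real.Gamma (α+1) * (C * t ^ α)
          * Real.Gamma (α * i + β * ((j : ℝ) - i) + 1) := by
      have c1 : (0:ℝ) ≤ 2 * (j.choose i : ℝ) * Real.Gamma (β+1) * (D * t ^ β) := by positivity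
      calc 2 * (j.choose i : ℝ) * Real.Gamma (β+1) * (D * t ^ β)
            * Real.Gamma (α * ((i:ℕ)+1 : ℕ) + β * ((j : ℝ) - ((i:ℕ)+1 : ℕ)) + 1)
          ≤ 2 * (j.choose i : ℝ) * Real.Gamma (β+1) * (D * t ^ β)
            * (Real.Gamma (α * i + β * ((j : ℝ) - i) + 1)
              * (α * ((j:ℝ) - 1) + β + 1) ^ (α - β)) :=
            mul_le_mul_of_nonneg_left hG c1
        _ ≤ 2 * ((j:ℝ) * (j.choose (i+1) : ℝ)) * Real.Gamma (β+1) * (D * t ^ β)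
            * (Real.Gamma (α * i + β * ((j : ℝ) - i) + 1)
              * (α * ((j:ℝ) - 1) + β + 1) ^ (α - β)) := by
            have hmono : (0:ℝ) ≤ 2 * Real.Gamma (β+1) * (D * t ^ β)
              * (Real.Gamma (α * i + β * ((j : ℝ) - i) + 1)
                * (α * ((j:ℝ) - 1) + β + 1) ^ (α - β)) := by
              have := Real.rpow_pos_of_pos hX (α - β)
              positivity
            nlinarith [mul_le_mul_of_nonneg_right hchoose hmono]
        _ = ((j.choose (i+1) : ℝ) * Real.Gamma (α * i + β * ((j : ℝ) - i) + 1) * t ^ β)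
            * (2 * D * Real.Gamma (β+1) * (j:ℝ) * (α * ((j:ℝ) - 1) + β + 1) ^ (α - β)) := by
            ring
        _ ≤ ((j.choose (i+1) : ℝ) * Real.Gamma (α * i + β * ((j : ℝ) - i) + 1) * t ^ β)
            * (C * Real.Gamma (α+1) * t ^ (α - β)) := by
            apply mul_le_mul_of_nonneg_left hcond
            have := Real.rpow_pos_of_pos ht0 β
            positivity
        _ = (j.choose (i+1) : ℝ) * Real.Gamma (α+1) * (C * t ^ α)
            * Real.Gamma (α * i + β * ((j : ℝ) - i) + 1) := by
            rw [htα]; ring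
    -- assemble
    rw [auxSummand_def, auxSummand_def]
    rw [show j - i = (j - (i+1)) + 1 by omega]
    have hdiv : 2 * (j.choose i : ℝ) * Real.Gamma (β+1) * (D * t ^ β)
          / Real.Gamma (α * i + β * ((j : ℝ) - i) + 1)
        ≤ (j.choose (i+1) : ℝ) * Real.Gamma (α+1) * (C * t ^ α)
          / Real.Gamma (α * ((i:ℕ)+1 : ℕ) + β * ((j : ℝ) - ((i:ℕ)+1 : ℕ)) + 1) := by
      rw [div_le_div_iff₀ hGi hGi1]
      exact hcore
    have hK : (0:ℝ) ≤ (Real.Gamma (α+1)) ^ i * (Real.Gamma (β+1)) ^ (j - (i+1))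
        * (C * t ^ α) ^ i * (D * t ^ β) ^ (j - (i+1)) := by
      have h1 := Real.rpow_pos_of_pos ht0 α
      have h2 := Real.rpow_pos_of_pos ht0 β
      positivity
    have := mul_le_mul_of_nonneg_right hdiv hK
    calc 2 * ((j.choose i : ℝ) *
          ((Real.Gamma (α + 1)) ^ i * (Real.Gamma (β + 1)) ^ ((j - (i+1)) + 1)
            / Real.Gamma (α * i + β * ((j : ℝ) - i) + 1)) *
          (C * t ^ α) ^ i * (D * t ^ β) ^ ((j - (i+1)) + 1))
        = (2 * (j.choose i : ℝ) * Real.Gamma (β+1) * (D * t ^ β)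
            / Real.Gamma (α * i + β * ((j : ℝ) - i) + 1))
          * ((Real.Gamma (α+1)) ^ i * (Real.Gamma (β+1)) ^ (j - (i+1))
            * (C * t ^ α) ^ i * (D * t ^ β) ^ (j - (i+1))) := by
          rw [pow_succ, pow_succ]; ring
      _ ≤ ((j.choose (i+1) : ℝ) * Real.Gamma (α+1) * (C * t ^ α)
            / Real.Gamma (α * ((i:ℕ)+1 : ℕ) + β * ((j : ℝ) - ((i:ℕ)+1 : ℕ)) + 1))
          * ((Real.Gamma (α+1)) ^ i * (Real.Gamma (β+1)) ^ (j - (i+1))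
            * (C * t ^ α) ^ i * (D * t ^ β) ^ (j - (i+1))) := this
      _ = (j.choose (i+1) : ℝ) *
          ((Real.Gamma (α + 1)) ^ (i+1) * (Real.Gamma (β + 1)) ^ (j - (i+1))
            / Real.Gamma (α * ((i:ℕ)+1 : ℕ) + β * ((j : ℝ) - ((i:ℕ)+1 : ℕ)) + 1)) *
          (C * t ^ α) ^ (i+1) * (D * t ^ β) ^ (j - (i+1)) := by
          rw [pow_succ, pow_succ]; ring
  -- decay
  have decay : ∀ k i : ℕ, i + k + 1 = j →
      auxSummand C D α β t j i ≤ (1/2:ℝ)^k * auxSummand C D α β t j (j - 1) := by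
    intro k
    induction k with
    | zero =>
      intro i hi
      rw [show i = j - 1 by omega]
      simp
    | succ k ih =>
      intro i hi
      have h2 := key i (by omega)
      have h3 := ih (i+1) (by omega)
      calc auxSummand C D α β t j i ≤ (1/2:ℝ) * auxSummand C D α β t j (i+1) := by linarith
        _ ≤ (1/2:ℝ) * ((1/2:ℝ)^k * auxSummand C D α β t j (j - 1)) :=
            mul_le_mul_of_nonneg_left h3 (by norm_num)
        _ = (1/2:ℝ)^(k+1) * auxSummand C D α β t j (j - 1) := by ring
  -- value of top term
  have hj1 : ((j - 1 : ℕ) : ℝ) = (j:ℝ) - 1 := by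
    push_cast [Nat.cast_sub hj]; ring
  have hfj : auxSummand C D α β t j (j - 1)
      = D * C ^ (j - 1) * (j:ℝ) *
          ((Real.Gamma (α + 1)) ^ (j - 1) * Real.Gamma (β + 1)
            / Real.Gamma (α * ((j : ℝ) - 1) + β + 1)) *
          t ^ (α * ((j : ℝ) - 1) + β) := by
    rw [auxSummand_def, show j - (j-1) = 1 by omega, show j.choose (j-1) = j from by
      rw [← Nat.choose_symm (by omega : j - 1 ≤ j), show j - (j-1) = 1 by omega,
        Nat.choose_one_right], hj1]
    rw [show α * ((j:ℝ) - 1) + β * ((j : ℝ) - ((j:ℝ) - 1)) + 1 = α * ((j:ℝ) - 1) + β + 1 by ring]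
    rw [mul_pow, ← Real.rpow_natCast (t ^ α) (j-1), ← Real.rpow_mul ht, hj1]
    rw [Real.rpow_add ht0 (α * ((j:ℝ)-1)) β]
    ring
  have hE0 : (0:ℝ) ≤ auxSummand C D α β t j (j - 1) := by
    rw [hfj]
    have hGX := Real.Gamma_pos_of_pos hX
    have h1 := Real.rpow_nonneg ht (α * ((j:ℝ) - 1) + β)
    positivity
  -- geometric sum bound
  have hgeom : ∑ k ∈ Finset.range j, (1/2:ℝ)^k ≤ 2 := by
    rw [geom_sum_eq (by norm_num : (1/2:ℝ) ≠ 1)]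
    have h1 : (0:ℝ) ≤ (1/2:ℝ)^j := by positivity
    have h2 : ((1/2:ℝ)^j - 1) / ((1/2:ℝ) - 1) = 2 - 2 * (1/2:ℝ)^j := by
      field_simp; ring
    rw [h2]; linarith
  have hmain : ∑ i ∈ Finset.range j, auxSummand C D α β t j i
      ≤ 2 * auxSummand C D α β t j (j - 1) := by
    calc ∑ i ∈ Finset.range j, auxSummand C D α β t j i
        ≤ ∑ i ∈ Finset.range j, (1/2:ℝ)^(j-1-i) * auxSummand C D α β t j (j - 1) :=
          Finset.sum_le_sum (fun i hi => decay (j-1-i) i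
            (by have := Finset.mem_range.mp hi; omega))
      _ = ∑ k ∈ Finset.range j, (1/2:ℝ)^k * auxSummand C D α β t j (j - 1) :=
          Finset.sum_range_reflect (fun k => (1/2:ℝ)^k * auxSummand C D α β t j (j - 1)) j
      _ = (∑ k ∈ Finset.range j, (1/2:ℝ)^k) * auxSummand C D α β t j (j - 1) := by
          rw [Finset.sum_mul]
      _ ≤ 2 * auxSummand C D α β t j (j - 1) :=
          mul_le_mul_of_nonneg_right hgeom hE0
  calc ∑ i ∈ Finset.range j, (j.choose i : ℝ) *
        ((Real.Gamma (α + 1)) ^ i * (Real.Gamma (β + 1)) ^ (j - i)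
          / Real.Gamma (α * i + β * ((j : ℝ) - i) + 1)) *
        (C * t ^ α) ^ i * (D * t ^ β) ^ (j - i)
      = ∑ i ∈ Finset.range j, auxSummand C D α β t j i := rfl
    _ ≤ 2 * auxSummand C D α β t j (j - 1) := hmain
    _ ≤ (21/10) * auxSummand C D α β t j (j - 1) := by linarith
    _ = 21 / 10 * D * C ^ (j - 1) * j *
          ((Real.Gamma (α + 1)) ^ (j - 1) * Real.Gamma (β + 1)
            / Real.Gamma (α * ((j : ℝ) - 1) + β + 1)) *
          t ^ (α * ((j : ℝ) - 1) + β) := by rw [hfj]; ring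
end

section
/- For every t≥0 and every positive integer j satisfying 2DΓ(β+1)·j·(α(j−1)+β+1)^{α−β} ≤ CΓ(α+1)·t^{α−β}, one has V_j(t) ≤ (331/100)·ρ_j·t^{αj}. -/
/-!
Write `I^γ` for Riemann–Liouville integration of order `γ`. A Beta integral shows that `I^γ` maps
`rpowDivGamma e = t ^ e / Γ(e + 1)` to `rpowDivGamma (γ + e)`, and the layer-cake formula shows
`∫_{[0,s]} rpowDivGamma γ (s - x) dν(x) = I^γ (ν[0, ·])(s)`. As `(ν ∗ μ)[0, s]` is at most
`∫_{[0,s]} μ[0, s - x] dν(x)` for measures carried by `[0, ∞)`, bounds of `ν[0, ·]` and `μ[0, ·]`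
by nonnegative combinations of the `rpowDivGamma e` multiply like the corresponding combinations
of the operators `I^e`. Since `V₁ ≤ a I^α 1 + b I^β 1` with `a = C Γ(α + 1)`, `b = D Γ(β + 1)`,
we get `V_j ≤ (a I^α + b I^β)^j 1`, a binomial sum. Iterating Wendel's inequality
`Γ(x + s) ≤ x ^ s Γ(x)` (log-convexity of `Γ`) and using `C(j, k) ≤ j ^ k`, the term with `k`
factors `b I^β` is at most `(j b M^(α-β) / (a t^(α-β)))^k ρ_j t^(αj)` with `M = α(j-1) + β + 1`;
the hypothesis makes the ratio at most `1/2`, so the sum is at most `2 ρ_j t^(αj)`.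
-/

open MeasureTheory

noncomputable def mconv (μ ν : Measure ℝ) : Measure ℝ :=
  (μ.prod ν).map (fun p => p.1 + p.2)

noncomputable def convpow (μ : Measure ℝ) : ℕ → Measure ℝ
  | 0 => Measure.dirac 0
  | n + 1 => mconv (convpow μ n) μ

open Set ENNReal Finset.HasAntidiagonal

lemma Real.Gamma_add_le_rpow_mul_Gamma {x s : ℝ} (hx : 0 < x) (hs0 : 0 < s) (hs1 : s < 1) :
    Real.Gamma (x + s) ≤ x ^ s * Real.Gamma x := by
  have hΓ := Real.Gamma_pos_of_pos hx
  calc Real.Gamma (x + s) = Real.Gamma ((1 - s) * x + s * (x + 1)) := by ring_nf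
    _ ≤ Real.Gamma x ^ (1 - s) * Real.Gamma (x + 1) ^ s :=
      Real.Gamma_mul_add_mul_le_rpow_Gamma_mul_rpow_Gamma hx (by linarith) (sub_pos.2 hs1) hs0
        (by ring)
    _ = x ^ s * Real.Gamma x := by
      rw [Real.Gamma_add_one hx.ne', Real.mul_rpow hx.le hΓ.le, mul_left_comm,
        ← Real.rpow_add hΓ, sub_add_cancel, Real.rpow_one]

lemma Real.Gamma_add_nat_mul_le {y s M : ℝ} (hy : 0 < y) (hs0 : 0 < s) (hs1 : s < 1) :
    ∀ k : ℕ, y + (k - 1) * s ≤ M → Real.Gamma (y + k * s) ≤ (M ^ s) ^ k * Real.Gamma y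
  | 0, _ => by simp
  | k + 1, hM => by
    push_cast at hM ⊢
    have hyk : 0 < y + k * s := by positivity
    calc Real.Gamma (y + (k + 1) * s) = Real.Gamma (y + k * s + s) := by ring_nf
      _ ≤ (y + k * s) ^ s * Real.Gamma (y + k * s) :=
        Real.Gamma_add_le_rpow_mul_Gamma hyk hs0 hs1
      _ ≤ M ^ s * ((M ^ s) ^ k * Real.Gamma y) := by
        refine mul_le_mul (Real.rpow_le_rpow hyk.le (by linarith) hs0.le)
          (Real.Gamma_add_nat_mul_le hy hs0 hs1 k (by linarith))
          (Real.Gamma_pos_of_pos hyk).le (Real.rpow_nonneg (by linarith) s)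
      _ = (M ^ s) ^ (k + 1) * Real.Gamma y := by ring

lemma integral_rpow_mul_sub_rpow {p q a : ℝ} (hp : 0 < p) (hq : 0 < q) (ha : 0 < a) :
    ∫ x in (0:ℝ)..a, x ^ (p - 1) * (a - x) ^ (q - 1) =
      a ^ (p + q - 1) * (Real.Gamma p * Real.Gamma q / Real.Gamma (p + q)) := by
  have h := Complex.betaIntegral_scaled p q ha
  rw [Complex.betaIntegral_eq_Gamma_mul_div _ _ (by simpa) (by simpa)] at h
  have hL : ∫ x in (0:ℝ)..a, (x : ℂ) ^ ((p : ℂ) - 1) * ((a : ℂ) - x) ^ ((q : ℂ) - 1) =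
      ((∫ x in (0:ℝ)..a, x ^ (p - 1) * (a - x) ^ (q - 1) : ℝ) : ℂ) := by
    rw [← intervalIntegral.integral_ofReal]
    refine intervalIntegral.integral_congr fun x hx => ?_
    rw [uIcc_of_le ha.le] at hx
    push_cast
    rw [Complex.ofReal_cpow hx.1, Complex.ofReal_cpow (sub_nonneg.2 hx.2)]
    push_cast
    ring_nf
  rw [hL, show (p : ℂ) + q - 1 = (p + q - 1 : ℝ) by push_cast; ring,
    show (p : ℂ) + q = (p + q : ℝ) by push_cast; ring, ← Complex.ofReal_cpow ha.le,
    Complex.Gamma_ofReal, Complex.Gamma_ofReal, Complex.Gamma_ofReal] at h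
  exact_mod_cast h

noncomputable def rpowDivGamma (e s : ℝ) : ℝ := s ^ e / Real.Gamma (e + 1)

lemma rpowDivGamma_nonneg {e s : ℝ} (he : 0 ≤ e) (hs : 0 ≤ s) : 0 ≤ rpowDivGamma e s :=
  div_nonneg (Real.rpow_nonneg hs e) (Real.Gamma_pos_of_pos (by linarith)).le

lemma setLIntegral_rpowDivGamma_sub_mul_rpow_div_Gamma {γ e s : ℝ} (hγ : 0 < γ) (he : 0 ≤ e)
    (hs : 0 ≤ s) :
    ∫⁻ u in Ioc 0 s,
        ENNReal.ofReal (rpowDivGamma e (s - u)) * ENNReal.ofReal (u ^ (γ - 1) / Real.Gamma γ) =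
      ENNReal.ofReal (rpowDivGamma (γ + e) s) := by
  rcases hs.eq_or_lt with rfl | hs
  · simp [rpowDivGamma, Real.zero_rpow (by linarith : γ + e ≠ 0)]
  have hΓγ := Real.Gamma_pos_of_pos hγ
  have hΓe := Real.Gamma_pos_of_pos (by linarith : 0 < e + 1)
  have hint : IntegrableOn (fun u => u ^ (γ - 1) * (s - u) ^ e) (Ioc 0 s) :=
    (((intervalIntegrable_iff_integrableOn_Icc_of_le hs.le).1
      (intervalIntegral.intervalIntegrable_rpow' (by linarith))).mul_continuousOn
      (Real.continuous_rpow_const he |>.comp (continuous_sub_left s)).continuousOn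
      isCompact_Icc).mono_set Ioc_subset_Icc_self
  have hB := integral_rpow_mul_sub_rpow hγ (by linarith : 0 < e + 1) hs
  rw [add_sub_cancel_right, show γ + (e + 1) - 1 = γ + e by ring,
    show γ + (e + 1) = γ + e + 1 by ring, intervalIntegral.integral_of_le hs.le] at hB
  obtain ⟨κ, hκ⟩ : ∃ κ, κ = (Real.Gamma γ * Real.Gamma (e + 1))⁻¹ := ⟨_, rfl⟩
  calc ∫⁻ u in Ioc 0 s,
        ENNReal.ofReal (rpowDivGamma e (s - u)) * ENNReal.ofReal (u ^ (γ - 1) / Real.Gamma γ)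
      = ∫⁻ u in Ioc 0 s, ENNReal.ofReal (κ * (u ^ (γ - 1) * (s - u) ^ e)) :=
        setLIntegral_congr_fun measurableSet_Ioc fun u hu => by
          rw [← ENNReal.ofReal_mul (rpowDivGamma_nonneg he (sub_nonneg.2 hu.2)), rpowDivGamma,
            hκ, mul_inv]
          ring_nf
    _ = ENNReal.ofReal (∫ u in Ioc 0 s, κ * (u ^ (γ - 1) * (s - u) ^ e)) :=
        (ofReal_integral_eq_lintegral_ofReal (hint.const_mul _)
          (ae_restrict_of_forall_mem measurableSet_Ioc fun u hu =>
            mul_nonneg (hκ ▸ by positivity) (mul_nonneg (Real.rpow_nonneg hu.1.le _)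
              (Real.rpow_nonneg (sub_nonneg.2 hu.2) _)))).symm
    _ = ENNReal.ofReal (rpowDivGamma (γ + e) s) := by
        rw [integral_const_mul, hB, rpowDivGamma, hκ]
        field_simp

lemma setLIntegral_rpowDivGamma_sub_eq (ν : Measure ℝ) {γ s : ℝ} (hγ : 0 < γ) (hs : 0 ≤ s) :
    ∫⁻ x in Icc 0 s, ENNReal.ofReal (rpowDivGamma γ (s - x)) ∂ν =
      ∫⁻ u in Ioc 0 s, ν (Icc 0 (s - u)) * ENNReal.ofReal (u ^ (γ - 1) / Real.Gamma γ) := by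
  have hΓ := Real.Gamma_pos_of_pos hγ
  have hlevel : ∀ u, 0 < u → ν.restrict (Icc 0 s) {x | u ≤ s - x} = ν (Icc 0 (s - u)) := by
    intro u hu
    rw [Measure.restrict_apply' measurableSet_Icc]
    congr 1
    ext x
    exact ⟨fun ⟨h, h0, _⟩ => ⟨h0, by linarith [show u ≤ s - x from h]⟩,
      fun ⟨h0, h⟩ => ⟨show u ≤ s - x by linarith, h0, by linarith⟩⟩
  have hconst : ENNReal.ofReal γ * ENNReal.ofReal (Real.Gamma (γ + 1))⁻¹ =
      ENNReal.ofReal (Real.Gamma γ)⁻¹ := by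
    rw [← ENNReal.ofReal_mul hγ.le, Real.Gamma_add_one hγ.ne', mul_inv, ← mul_assoc,
      mul_inv_cancel₀ hγ.ne', one_mul]
  simp_rw [rpowDivGamma, div_eq_mul_inv, ENNReal.ofReal_mul' (inv_nonneg.2 hΓ.le),
    ENNReal.ofReal_mul' (inv_nonneg.2 (Real.Gamma_pos_of_pos (by linarith : 0 < γ + 1)).le)]
  rw [lintegral_mul_const' _ _ ofReal_ne_top, lintegral_rpow_eq_lintegral_meas_le_mul _
    (ae_restrict_of_forall_mem measurableSet_Icc fun x hx => sub_nonneg.2 hx.2) (by fun_prop) hγ,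
    ← Ioc_union_Ioi_eq_Ioi hs, lintegral_union measurableSet_Ioi (Ioc_disjoint_Ioi le_rfl),
    setLIntegral_congr_fun measurableSet_Ioi fun u hu => by
      rw [hlevel u (hs.trans_lt hu), Icc_eq_empty (by linarith [mem_Ioi.1 hu]), measure_empty,
        zero_mul],
    lintegral_zero, add_zero, mul_right_comm, hconst, ← lintegral_const_mul' _ _ ofReal_ne_top]
  exact setLIntegral_congr_fun measurableSet_Ioc fun u hu => by rw [hlevel u hu.1]; ring

lemma setLIntegral_rpowDivGamma_sub_le {ι : Type*} {ν : Measure ℝ} {I : Finset ι} {c e : ι → ℝ}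
    {γ s : ℝ} (hγ : 0 ≤ γ) (hs : 0 ≤ s) (hc : ∀ k ∈ I, 0 ≤ c k) (he : ∀ k ∈ I, 0 ≤ e k)
    (hν : ∀ v ∈ Icc 0 s, ν (Icc 0 v) ≤ ENNReal.ofReal (∑ k ∈ I, c k * rpowDivGamma (e k) v)) :
    ∫⁻ x in Icc 0 s, ENNReal.ofReal (rpowDivGamma γ (s - x)) ∂ν ≤
      ENNReal.ofReal (∑ k ∈ I, c k * rpowDivGamma (γ + e k) s) := by
  rcases hγ.eq_or_lt with rfl | hγ
  · simpa [rpowDivGamma] using hν s ⟨hs, le_rfl⟩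
  rw [setLIntegral_rpowDivGamma_sub_eq ν hγ hs, ENNReal.ofReal_sum_of_nonneg fun k hk =>
    mul_nonneg (hc k hk) (rpowDivGamma_nonneg (add_nonneg hγ.le (he k hk)) hs)]
  calc ∫⁻ u in Ioc 0 s, ν (Icc 0 (s - u)) * ENNReal.ofReal (u ^ (γ - 1) / Real.Gamma γ)
      ≤ ∫⁻ u in Ioc 0 s, ∑ k ∈ I, ENNReal.ofReal (c k) * (ENNReal.ofReal
          (rpowDivGamma (e k) (s - u)) * ENNReal.ofReal (u ^ (γ - 1) / Real.Gamma γ)) :=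
        setLIntegral_mono' measurableSet_Ioc fun u hu => by
          have hsu : 0 ≤ s - u := sub_nonneg.2 hu.2
          refine (mul_le_mul_left (hν _ ⟨hsu, by linarith [hu.1]⟩) _).trans_eq ?_
          rw [ENNReal.ofReal_sum_of_nonneg fun k hk =>
            mul_nonneg (hc k hk) (rpowDivGamma_nonneg (he k hk) hsu), Finset.sum_mul]
          exact Finset.sum_congr rfl fun k hk => by rw [ENNReal.ofReal_mul (hc k hk), mul_assoc]
    _ = ∑ k ∈ I, ENNReal.ofReal (c k * rpowDivGamma (γ + e k) s) := by
        rw [lintegral_finsetSum' _ fun k _ => by unfold rpowDivGamma; fun_prop]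
        refine Finset.sum_congr rfl fun k hk => ?_
        rw [lintegral_const_mul' _ _ ofReal_ne_top,
          setLIntegral_rpowDivGamma_sub_mul_rpow_div_Gamma hγ (he k hk) hs,
          ENNReal.ofReal_mul (hc k hk)]

lemma sigmaFinite_of_Icc_lt_top {μ : Measure ℝ} (h0 : μ (Iio 0) = 0)
    (hfin : ∀ t, μ (Icc 0 t) < ⊤) : SigmaFinite μ := by
  refine ⟨⟨⟨fun n : ℕ => Iio 0 ∪ Icc 0 n, fun _ => trivial, fun n => ?_, ?_⟩⟩⟩
  · exact (measure_union_le _ _).trans_lt (by rw [h0, zero_add]; exact hfin n)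
  · refine eq_univ_of_forall fun x => mem_iUnion.2 ?_
    rcases lt_or_ge x 0 with hx | hx
    · exact ⟨0, Or.inl hx⟩
    · obtain ⟨n, hn⟩ := exists_nat_ge x
      exact ⟨n, Or.inr ⟨hx, hn⟩⟩

lemma mconv_apply (ν μ : Measure ℝ) [SFinite μ] {s : Set ℝ} (hs : MeasurableSet s) :
    mconv ν μ s = ∫⁻ x, μ {y | x + y ∈ s} ∂ν := by
  rw [mconv, Measure.map_apply (by fun_prop) hs, Measure.prod_apply (hs.preimage (by fun_prop))]
  rfl

lemma convpow_one (μ : Measure ℝ) [SFinite μ] : convpow μ 1 = μ := by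
  rw [convpow, convpow, mconv, Measure.dirac_prod, Measure.map_map (by fun_prop) (by fun_prop)]
  simp [Function.comp_def]

lemma mconv_Iio_eq_zero {ν μ : Measure ℝ} [SFinite μ] (hν : ν (Iio 0) = 0) (hμ : μ (Iio 0) = 0) :
    mconv ν μ (Iio 0) = 0 := by
  rw [mconv_apply _ _ measurableSet_Iio]
  refine (lintegral_congr_ae ((measure_eq_zero_iff_ae_notMem.1 hν).mono fun x hx => ?_)).trans
    lintegral_zero
  have hx : 0 ≤ x := not_lt.1 hx
  exact measure_mono_null (fun y (hy : x + y < 0) => show y < 0 by linarith) hμ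

lemma convpow_Iio_eq_zero {μ : Measure ℝ} [SFinite μ] (hμ : μ (Iio 0) = 0) (n : ℕ) :
    convpow μ n (Iio 0) = 0 := by
  induction n with
  | zero => simp [convpow]
  | succ n ih => exact mconv_Iio_eq_zero ih hμ

lemma mconv_Icc_le {ν μ : Measure ℝ} [SFinite μ] (hν : ν (Iio 0) = 0) (hμ : μ (Iio 0) = 0)
    (s : ℝ) : mconv ν μ (Icc 0 s) ≤ ∫⁻ x in Icc 0 s, μ (Icc 0 (s - x)) ∂ν := by
  rw [mconv_apply _ _ measurableSet_Icc, ← lintegral_indicator measurableSet_Icc]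
  refine lintegral_mono_ae ((measure_eq_zero_iff_ae_notMem.1 hν).mono fun x hx => ?_)
  have hx : 0 ≤ x := not_lt.1 hx
  by_cases hxs : x ≤ s
  · rw [indicator_of_mem (show x ∈ Icc 0 s from ⟨hx, hxs⟩)]
    calc μ {y | x + y ∈ Icc 0 s} ≤ μ (Iio 0 ∪ Icc 0 (s - x)) :=
          measure_mono fun y hy => by
            rcases lt_or_ge y 0 with h | h
            · exact Or.inl h
            · exact Or.inr ⟨h, by linarith [hy.2]⟩
      _ ≤ μ (Icc 0 (s - x)) := by
          simpa [hμ] using measure_union_le (μ := μ) (Iio 0) (Icc 0 (s - x))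
  · have hnull : μ {y | x + y ∈ Icc 0 s} = 0 :=
      measure_mono_null (fun y (hy : x + y ∈ Icc 0 s) => show y < 0 by linarith [hy.2]) hμ
    exact hnull.le.trans zero_le

lemma mconv_Icc_le_of_le {ι κ : Type*} {ν μ : Measure ℝ} [SFinite μ] (hν0 : ν (Iio 0) = 0)
    (hμ0 : μ (Iio 0) = 0) {I : Finset ι} {c e : ι → ℝ} {J : Finset κ} {d g : κ → ℝ}
    (hc : ∀ k ∈ I, 0 ≤ c k) (he : ∀ k ∈ I, 0 ≤ e k) (hd : ∀ l ∈ J, 0 ≤ d l)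
    (hg : ∀ l ∈ J, 0 ≤ g l)
    (hν : ∀ v, 0 ≤ v → ν (Icc 0 v) ≤ ENNReal.ofReal (∑ k ∈ I, c k * rpowDivGamma (e k) v))
    (hμ : ∀ v, 0 ≤ v → μ (Icc 0 v) ≤ ENNReal.ofReal (∑ l ∈ J, d l * rpowDivGamma (g l) v))
    {s : ℝ} (hs : 0 ≤ s) :
    mconv ν μ (Icc 0 s) ≤
      ENNReal.ofReal (∑ l ∈ J, d l * ∑ k ∈ I, c k * rpowDivGamma (g l + e k) s) := by
  have hsum : ∀ l ∈ J, 0 ≤ ∑ k ∈ I, c k * rpowDivGamma (g l + e k) s := fun l hl =>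
    Finset.sum_nonneg fun k hk =>
      mul_nonneg (hc k hk) (rpowDivGamma_nonneg (add_nonneg (hg l hl) (he k hk)) hs)
  calc mconv ν μ (Icc 0 s) ≤ ∫⁻ x in Icc 0 s, μ (Icc 0 (s - x)) ∂ν := mconv_Icc_le hν0 hμ0 s
    _ ≤ ∫⁻ x in Icc 0 s, ∑ l ∈ J,
          ENNReal.ofReal (d l) * ENNReal.ofReal (rpowDivGamma (g l) (s - x)) ∂ν :=
        setLIntegral_mono' measurableSet_Icc fun x hx => by
          refine (hμ _ (sub_nonneg.2 hx.2)).trans_eq ?_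
          rw [ENNReal.ofReal_sum_of_nonneg fun l hl =>
            mul_nonneg (hd l hl) (rpowDivGamma_nonneg (hg l hl) (sub_nonneg.2 hx.2))]
          exact Finset.sum_congr rfl fun l hl => ENNReal.ofReal_mul (hd l hl)
    _ = ∑ l ∈ J, ENNReal.ofReal (d l) *
          ∫⁻ x in Icc 0 s, ENNReal.ofReal (rpowDivGamma (g l) (s - x)) ∂ν := by
        rw [lintegral_finsetSum' _ fun l _ => by unfold rpowDivGamma; fun_prop]
        exact Finset.sum_congr rfl fun l _ => lintegral_const_mul' _ _ ofReal_ne_top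
    _ ≤ ∑ l ∈ J, ENNReal.ofReal (d l) *
          ENNReal.ofReal (∑ k ∈ I, c k * rpowDivGamma (g l + e k) s) :=
        Finset.sum_le_sum fun l hl => by
          gcongr
          exact setLIntegral_rpowDivGamma_sub_le (hg l hl) hs hc he fun v hv => hν v hv.1
    _ = _ := by
        rw [ENNReal.ofReal_sum_of_nonneg fun l hl => mul_nonneg (hd l hl) (hsum l hl)]
        exact Finset.sum_congr rfl fun l hl => (ENNReal.ofReal_mul (hd l hl)).symm

/-- `((a I^α + b I^β)^n 1)(s)`, where `p.1` counts the factors `b I^β`. -/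
noncomputable def binomBound (a b α β : ℝ) (n : ℕ) (s : ℝ) : ℝ :=
  ∑ p ∈ antidiagonal n,
    (n.choose p.1 : ℝ) * b ^ p.1 * a ^ p.2 * rpowDivGamma (β * p.1 + α * p.2) s

lemma binomBound_succ (a b α β : ℝ) (n : ℕ) (s : ℝ) :
    binomBound a b α β (n + 1) s =
      a * ∑ p ∈ antidiagonal n, (n.choose p.1 : ℝ) * b ^ p.1 * a ^ p.2 *
          rpowDivGamma (α + (β * p.1 + α * p.2)) s +
        b * ∑ p ∈ antidiagonal n, (n.choose p.1 : ℝ) * b ^ p.1 * a ^ p.2 *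
          rpowDivGamma (β + (β * p.1 + α * p.2)) s := by
  simp only [binomBound, mul_assoc]
  rw [Finset.sum_antidiagonal_choose_succ_mul
    (fun k m => b ^ k * (a ^ m * rpowDivGamma (β * k + α * m) s)), Finset.mul_sum, Finset.mul_sum]
  congr 1
  · refine Finset.sum_congr rfl fun p _ => ?_
    push_cast
    ring_nf
  · refine Finset.sum_congr rfl fun p hp => ?_
    rw [← Nat.choose_symm_of_eq_add (mem_antidiagonal.1 hp).symm]
    push_cast
    ring_nf

lemma convpow_Icc_le {μ : Measure ℝ} [SFinite μ] (hμ0 : μ (Iio 0) = 0) {a b α β : ℝ}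
    (ha : 0 ≤ a) (hb : 0 ≤ b) (hα : 0 ≤ α) (hβ : 0 ≤ β)
    (hμ : ∀ v, 0 ≤ v →
      μ (Icc 0 v) ≤ ENNReal.ofReal (a * rpowDivGamma α v + b * rpowDivGamma β v))
    (n : ℕ) {s : ℝ} (hs : 0 ≤ s) :
    convpow μ n (Icc 0 s) ≤ ENNReal.ofReal (binomBound a b α β n s) := by
  induction n generalizing s with
  | zero => simp [convpow, binomBound, rpowDivGamma, hs]
  | succ n ih =>
    have hμ' : ∀ v, 0 ≤ v → μ (Icc 0 v) ≤
        ENNReal.ofReal (∑ l : Fin 2, ![a, b] l * rpowDivGamma (![α, β] l) v) := by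
      simpa [Fin.sum_univ_two] using hμ
    have h := mconv_Icc_le_of_le (convpow_Iio_eq_zero hμ0 n) hμ0
      (c := fun p => (n.choose p.1 : ℝ) * b ^ p.1 * a ^ p.2)
      (e := fun p : ℕ × ℕ => β * p.1 + α * p.2)
      (fun p _ => by positivity) (fun p _ => by positivity)
      (fun l _ => by fin_cases l <;> simpa) (fun l _ => by fin_cases l <;> simpa)
      (fun v hv => ih hv) hμ' hs
    rw [convpow, binomBound_succ]
    simpa [Fin.sum_univ_two] using h

lemma choose_mul_rpowDivGamma_le {a b α β t : ℝ} {j k m : ℕ} (ha : 0 ≤ a) (hb : 0 ≤ b)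
    (hβ : 0 ≤ β) (hβα : β < α) (hα1 : α < 1) (ht : 0 ≤ t) (hj : 1 ≤ j) (hkm : k + m = j)
    (hcond : 2 * b * j * (α * ((j : ℝ) - 1) + β + 1) ^ (α - β) ≤ a * t ^ (α - β)) :
    (j.choose k : ℝ) * b ^ k * a ^ m * rpowDivGamma (β * k + α * m) t ≤
      (1 / 2) ^ k * (a ^ j * rpowDivGamma (α * j) t) := by
  subst hkm
  set x := (α * (((k + m : ℕ) : ℝ) - 1) + β + 1) ^ (α - β)
  have hα : 0 < α := hβ.trans_lt hβα
  have hy : 0 < β * k + α * m + 1 := by positivity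
  have hj' : (1 : ℝ) ≤ (k + m : ℕ) := by exact_mod_cast hj
  have hx : 0 ≤ x := Real.rpow_nonneg (by nlinarith) _
  have hΓ : Real.Gamma (α * (k + m : ℕ) + 1) ≤ x ^ k * Real.Gamma (β * k + α * m + 1) := by
    have h := Real.Gamma_add_nat_mul_le hy (sub_pos.2 hβα) (by linarith) k
      (M := α * (((k + m : ℕ) : ℝ) - 1) + β + 1) (le_of_eq (by push_cast; ring))
    convert h using 2
    push_cast
    ring
  have hchoose : ((k + m).choose k : ℝ) ≤ ((k + m : ℕ) : ℝ) ^ k := by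
    exact_mod_cast Nat.choose_le_pow (k + m) k
  have htsplit : t ^ (α * (k + m : ℕ)) = t ^ (β * k + α * m) * (t ^ (α - β)) ^ k := by
    have he : β * k + α * m + (α - β) * k = α * (k + m : ℕ) := by push_cast; ring
    rw [← Real.rpow_natCast, ← Real.rpow_mul ht, ← Real.rpow_add' ht (by rw [he]; positivity),
      he]
  have hΓpos := Real.Gamma_pos_of_pos hy
  have hΓpos' := Real.Gamma_pos_of_pos (by positivity : 0 < α * (k + m : ℕ) + 1)
  have htpos := Real.rpow_nonneg ht (β * k + α * m)
  calc ((k + m).choose k : ℝ) * b ^ k * a ^ m * rpowDivGamma (β * k + α * m) t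
      ≤ ((k + m : ℕ) : ℝ) ^ k * b ^ k * a ^ m *
          (t ^ (β * k + α * m) * x ^ k / Real.Gamma (α * (k + m : ℕ) + 1)) := by
        rw [rpowDivGamma]
        gcongr ?_ * _ * _ * ?_
        rw [div_le_div_iff₀ hΓpos hΓpos', mul_assoc]
        exact mul_le_mul_of_nonneg_left hΓ htpos
    _ = (((k + m : ℕ) : ℝ) * b * x) ^ k * a ^ m * t ^ (β * k + α * m) /
          Real.Gamma (α * (k + m : ℕ) + 1) := by ring
    _ ≤ (a * t ^ (α - β) / 2) ^ k * a ^ m * t ^ (β * k + α * m) /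
          Real.Gamma (α * (k + m : ℕ) + 1) := by
        gcongr
        linarith
    _ = (1 / 2) ^ k * (a ^ (k + m) * rpowDivGamma (α * (k + m : ℕ)) t) := by
        rw [rpowDivGamma, htsplit]
        ring

lemma binomBound_le {a b α β t : ℝ} {j : ℕ} (ha : 0 ≤ a) (hb : 0 ≤ b) (hβ : 0 ≤ β)
    (hβα : β < α) (hα1 : α < 1) (ht : 0 ≤ t) (hj : 1 ≤ j)
    (hcond : 2 * b * j * (α * ((j : ℝ) - 1) + β + 1) ^ (α - β) ≤ a * t ^ (α - β)) :
    binomBound a b α β j t ≤ 2 * (a ^ j * rpowDivGamma (α * j) t) := by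
  have hρ : 0 ≤ a ^ j * rpowDivGamma (α * j) t :=
    mul_nonneg (pow_nonneg ha j)
      (rpowDivGamma_nonneg (mul_nonneg (hβ.trans hβα.le) j.cast_nonneg) ht)
  calc binomBound a b α β j t
      ≤ ∑ p ∈ antidiagonal j, (1 / 2 : ℝ) ^ p.1 * (a ^ j * rpowDivGamma (α * j) t) :=
        Finset.sum_le_sum fun p hp =>
          choose_mul_rpowDivGamma_le ha hb hβ hβα hα1 ht hj (mem_antidiagonal.1 hp) hcond
    _ = (∑ k ∈ Finset.range (j + 1), (1 / 2 : ℝ) ^ k) * (a ^ j * rpowDivGamma (α * j) t) := by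
        rw [← Finset.sum_mul,
          Finset.Nat.sum_antidiagonal_eq_sum_range_succ fun k _ => (1 / 2 : ℝ) ^ k]
    _ ≤ 2 * (a ^ j * rpowDivGamma (α * j) t) := by
        gcongr
        exact sum_geometric_two_le _

theorem corollary_ineq_vj
    (μ : Measure ℝ) (hsupp : μ (Set.Iio 0) = 0)
    (hfin : ∀ t : ℝ, μ (Set.Icc 0 t) < ⊤)
    (C D α β : ℝ) (hC : 0 < C) (hD : 0 < D)
    (hβ : 0 ≤ β) (hβα : β < α) (hα1 : α < 1)
    (V : ℕ → ℝ → ℝ) (hV : ∀ j t, V j t = (convpow μ j (Set.Icc 0 t)).toReal)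
    (hVbound : ∀ t ≥ (0:ℝ), |V 1 t - C * t ^ α| ≤ D * t ^ β)
    (ρ : ℕ → ℝ)
    (hρ : ∀ i : ℕ, ρ i = (C * Real.Gamma (α + 1)) ^ i / Real.Gamma (α * i + 1)) :
    ∀ t ≥ (0:ℝ), ∀ j : ℕ, 1 ≤ j →
      2 * D * Real.Gamma (β + 1) * j * (α * ((j : ℝ) - 1) + β + 1) ^ (α - β)
          ≤ C * Real.Gamma (α + 1) * t ^ (α - β) →
      V j t ≤ 331 / 100 * ρ j * t ^ (α * j) := by
  intro t ht j hj hcond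
  have := sigmaFinite_of_Icc_lt_top hsupp hfin
  have hα : 0 < α := hβ.trans_lt hβα
  have hΓα := Real.Gamma_pos_of_pos (by linarith : 0 < α + 1)
  have hΓβ := Real.Gamma_pos_of_pos (by linarith : 0 < β + 1)
  have hμ : ∀ v, 0 ≤ v → μ (Icc 0 v) ≤ ENNReal.ofReal (C * Real.Gamma (α + 1) *
      rpowDivGamma α v + D * Real.Gamma (β + 1) * rpowDivGamma β v) := by
    intro v hv
    rw [← ENNReal.ofReal_toReal (hfin v).ne, ← convpow_one μ, ← hV]
    refine ENNReal.ofReal_le_ofReal ?_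
    simp only [rpowDivGamma]
    field_simp
    linarith [(abs_le.1 (hVbound v hv)).2]
  have hbound := (convpow_Icc_le hsupp (by positivity) (by positivity) hα.le hβ hμ j ht).trans
    (ENNReal.ofReal_le_ofReal (binomBound_le (by positivity) (by positivity) hβ hβα hα1 ht hj
      (by linarith)))
  have hρt : 0 ≤ ρ j * t ^ (α * j) := by
    have := Real.Gamma_pos_of_pos (by positivity : 0 < α * j + 1)
    rw [hρ]
    positivity
  rw [show (C * Real.Gamma (α + 1)) ^ j * rpowDivGamma (α * j) t = ρ j * t ^ (α * j) by
    rw [hρ, rpowDivGamma]; ring] at hbound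
  calc V j t = (convpow μ j (Icc 0 t)).toReal := hV j t
    _ ≤ 2 * (ρ j * t ^ (α * j)) := ENNReal.toReal_le_of_le_ofReal (by positivity) hbound
    _ ≤ 331 / 100 * ρ j * t ^ (α * j) := by linarith
end

section
/- For every α∈(0,1) there exists a constant c*>0, depending only on α, such that for every C>0, every integer j≥3 and every s>0 satisfying 2(α(j−2)+1)^{2α} ≤ CΓ(α+1)·s^α, one has ∑_{k=1}^{j−2} ρ_{k−1} ρ_k ρ_{j−k−1} · B(α(2k−1)+1, α) · s^{α(j+k−1)} ≤ c* · (CΓ(α+1))^{2j−3} · s^{2α(j−1)} / (Γ(α(j−2)+1))^2, where ρ_i=(CΓ(α+1))^i/Γ(αi+1) and B is the Euler beta function. -/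
/-!
Each summand is bounded by `4 Γ(α) A^(2j-3) s^(2α(j-1)) / Γ(P)² · 2^-(j-k-1)`, where
`A = C Γ(α+1)` and `P = α(j-2)+1`; the geometric factors then sum to at most `1`.
Log-convexity of `Γ` gives `Γ(x+y) ≤ (x+y)^y Γ(x)`, which trades each of `1/Γ(α(k-1)+1)` and
`1/Γ(αk+1)` for `P^(α(j-k-1)) / Γ(P)`. The hypothesis `2 P^(2α) ≤ A s^α`, raised to the power
`j-k-1`, absorbs both powers of `P` and leaves the factor `2^-(j-k-1)`. The remaining factors are
bounded uniformly: `1/Γ(α(j-k-1)+1) ≤ 2` and `B(α(2k-1)+1, α) ≤ 2 Γ(α)`.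
-/

namespace Real

theorem Gamma_add_le_rpow_mul_Gamma_s18 {x y : ℝ} (hx : 0 < x) (hy : 0 ≤ y) :
    Gamma (x + y) ≤ (x + y) ^ y * Gamma x := by
  rcases hy.eq_or_lt with rfl | hy
  · simp
  have hxy : 0 < x + y := by positivity
  -- `log ∘ Gamma` is convex and its slope on `[x + y, x + y + 1]` is `log (x + y)`
  have slope := convexOn_log_Gamma.slope_mono_adjacent (Set.mem_Ioi.mpr hx)
    (Set.mem_Ioi.mpr (by positivity : 0 < x + y + 1)) (lt_add_of_pos_right x hy) (lt_add_one _)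
  simp only [Function.comp_apply, Gamma_add_one hxy.ne',
    log_mul hxy.ne' (Gamma_pos_of_pos hxy).ne', add_sub_cancel_left, add_sub_cancel_right,
    div_one] at slope
  rw [div_le_iff₀ hy] at slope
  rw [← log_le_log_iff (Gamma_pos_of_pos hxy) (by positivity),
    log_mul (by positivity) (Gamma_pos_of_pos hx).ne', log_rpow hxy]
  linarith

theorem Gamma_add_le_rpow_mul_Gamma_of_le {x y z : ℝ} (hx : 0 < x) (hy : 0 ≤ y) (hyz : y ≤ z)
    (hxy : 1 ≤ x + y) : Gamma (x + y) ≤ (x + y) ^ z * Gamma x :=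
  (Gamma_add_le_rpow_mul_Gamma_s18 hx hy).trans <|
    mul_le_mul_of_nonneg_right (rpow_le_rpow_of_exponent_le hxy hyz) (Gamma_pos_of_pos hx).le

theorem Gamma_add_sq_le_rpow_mul_Gamma_mul_Gamma {x y t : ℝ} (hx : 0 < x) (ht : 0 ≤ t)
    (hty : t ≤ y) (hxy : 1 ≤ x + y) :
    Gamma (x + y) ^ 2 ≤ (x + y) ^ (2 * y) * (Gamma x * Gamma (x + t)) := by
  have h₁ := Gamma_add_le_rpow_mul_Gamma_of_le hx (ht.trans hty) le_rfl hxy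
  have h₂ := Gamma_add_le_rpow_mul_Gamma_of_le (x := x + t) (by positivity)
    (sub_nonneg.mpr hty) (sub_le_self y ht) (by linarith)
  rw [add_add_sub_cancel] at h₂
  rw [pow_two, two_mul, rpow_add (by positivity)]
  calc Gamma (x + y) * Gamma (x + y)
      ≤ ((x + y) ^ y * Gamma x) * ((x + y) ^ y * Gamma (x + t)) :=
        mul_le_mul h₁ h₂ (Gamma_pos_of_pos (by positivity)).le (by positivity)
    _ = _ := by ring

theorem one_half_le_Gamma {x : ℝ} (hx : 1 ≤ x) : 1 / 2 ≤ Gamma x := by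
  rcases le_total x 2 with hx2 | hx2
  · have h := Gamma_add_le_rpow_mul_Gamma_s18 (by linarith : 0 < x) (sub_nonneg.mpr hx2)
    rw [add_sub_cancel, Gamma_two] at h
    have : (2 : ℝ) ^ (2 - x) ≤ 2 := by
      simpa using rpow_le_rpow_of_exponent_le one_le_two (by linarith : 2 - x ≤ 1)
    nlinarith [Gamma_pos_of_pos (by linarith : 0 < x)]
  · have := Gamma_strictMonoOn_Ici.monotoneOn (Set.mem_Ici.mpr le_rfl) (Set.mem_Ici.mpr hx2) hx2
    rw [Gamma_two] at this
    linarith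

theorem Gamma_le_two_mul_Gamma_add {x t : ℝ} (hx : 1 ≤ x) (ht0 : 0 ≤ t) (ht1 : t ≤ 1) :
    Gamma x ≤ 2 * Gamma (x + t) := by
  have hx0 : 0 < x := by linarith
  have h := Gamma_add_le_rpow_mul_Gamma_s18 (by linarith : 0 < x + t) (sub_nonneg.mpr ht1)
  rw [add_add_sub_cancel, Gamma_add_one hx0.ne'] at h
  have : (x + 1) ^ (1 - t) ≤ 2 * x := by
    calc (x + 1) ^ (1 - t) ≤ (x + 1) ^ (1 : ℝ) :=
          rpow_le_rpow_of_exponent_le (by linarith) (by linarith)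
      _ ≤ 2 * x := by rw [rpow_one]; linarith
  nlinarith [Gamma_pos_of_pos (by linarith : 0 < x + t)]

theorem Gamma_mul_Gamma_div_Gamma_add_le {x t : ℝ} (hx : 1 ≤ x) (ht0 : 0 < t) (ht1 : t ≤ 1) :
    Gamma x * Gamma t / Gamma (x + t) ≤ 2 * Gamma t := by
  rw [div_le_iff₀ (Gamma_pos_of_pos (by linarith)), mul_right_comm]
  exact mul_le_mul_of_nonneg_right (Gamma_le_two_mul_Gamma_add hx ht0.le ht1)
    (Gamma_pos_of_pos ht0).le

theorem pow_mul_rpow_le_of_mul_rpow_le {c P A s a b : ℝ} (hc : 0 ≤ c) (hP : 0 ≤ P) (hs : 0 ≤ s)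
    (h : c * P ^ a ≤ A * s ^ b) (n : ℕ) : c ^ n * P ^ (a * n) ≤ A ^ n * s ^ (b * n) := by
  simpa only [mul_pow, rpow_mul_natCast hP, rpow_mul_natCast hs] using
    pow_le_pow_left₀ (by positivity) h n

end Real

theorem sum_Icc_one_half_pow_sub_le (j : ℕ) :
    ∑ k ∈ Finset.Icc 1 (j - 2), (1 / 2 : ℝ) ^ (j - k - 1) ≤ 1 := by
  have reindex : ∑ k ∈ Finset.Icc 1 (j - 2), (1 / 2 : ℝ) ^ (j - k - 1)
      = ∑ i ∈ Finset.range (j - 2), (1 / 2 : ℝ) ^ (i + 1) := by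
    refine Finset.sum_nbij' (fun k => j - 2 - k) (fun i => j - 2 - i) ?_ ?_ ?_ ?_ ?_ <;>
      intro a ha <;> simp only [Finset.mem_Icc, Finset.mem_range] at ha ⊢
    all_goals first | omega | congr 1; omega
  rw [reindex]
  simp only [pow_succ, ← Finset.sum_mul]
  linarith [sum_geometric_two_le (j - 2)]

open Real in
theorem beta_div_Gamma_mul_Gamma_mul_Gamma_le {α k n : ℝ} (hα0 : 0 < α) (hα1 : α ≤ 1)
    (hk : 1 ≤ k) (hn : 1 ≤ n) :
    Gamma (α * (2 * k - 1) + 1) * Gamma α / Gamma (α * (2 * k - 1) + 1 + α)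
        / (Gamma (α * (k - 1) + 1) * Gamma (α * k + 1) * Gamma (α * n + 1))
      ≤ 4 * Gamma α * (α * (k + n - 1) + 1) ^ (2 * α * n)
          / Gamma (α * (k + n - 1) + 1) ^ 2 := by
  set P := α * (k + n - 1) + 1
  have hP : 0 < P := by nlinarith
  have hg₃ : 1 / 2 ≤ Gamma (α * n + 1) := one_half_le_Gamma (by nlinarith)
  have hβ := Gamma_mul_Gamma_div_Gamma_add_le (x := α * (2 * k - 1) + 1) (by nlinarith) hα0 hα1
  have hg₁₂ := Gamma_add_sq_le_rpow_mul_Gamma_mul_Gamma (x := α * (k - 1) + 1) (t := α)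
    (y := α * n) (by nlinarith) hα0.le (by nlinarith) (by nlinarith)
  rw [show α * (k - 1) + 1 + α * n = P by ring, show α * (k - 1) + 1 + α = α * k + 1 by ring,
    ← mul_assoc 2 α] at hg₁₂
  rw [div_le_div_iff₀ (by positivity) (by positivity)]
  calc _ ≤ 2 * Gamma α * Gamma P ^ 2 := by gcongr
    _ ≤ 2 * Gamma α * (P ^ (2 * α * n) * (Gamma (α * (k - 1) + 1) * Gamma (α * k + 1))) := by
        gcongr
    _ = 4 * Gamma α * P ^ (2 * α * n)
          * (Gamma (α * (k - 1) + 1) * Gamma (α * k + 1) * (1 / 2)) := by ring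
    _ ≤ _ := by gcongr

open Real in
theorem convolution_term_le {α A s : ℝ} (hα0 : 0 < α) (hα1 : α ≤ 1) (hA : 0 ≤ A) (hs : 0 < s)
    {j k : ℕ} (hk : 1 ≤ k) (hkj : k + 2 ≤ j)
    (hyp : 2 * (α * ((j : ℝ) - 2) + 1) ^ (2 * α) ≤ A * s ^ α) :
    A ^ (k - 1) / Gamma (α * ((k : ℝ) - 1) + 1) * (A ^ k / Gamma (α * (k : ℝ) + 1)) *
        (A ^ (j - k - 1) / Gamma (α * ((j : ℝ) - (k : ℝ) - 1) + 1)) *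
        (Gamma (α * (2 * (k : ℝ) - 1) + 1) * Gamma α / Gamma (α * (2 * (k : ℝ) - 1) + 1 + α)) *
        s ^ (α * ((j : ℝ) + (k : ℝ) - 1))
      ≤ 4 * Gamma α * A ^ (2 * j - 3) * s ^ (2 * α * ((j : ℝ) - 1))
          / Gamma (α * ((j : ℝ) - 2) + 1) ^ 2 * (1 / 2) ^ (j - k - 1) := by
  obtain ⟨n, rfl⟩ : ∃ n, j = k + n + 1 := ⟨j - k - 1, by omega⟩
  have hkR : (1 : ℝ) ≤ k := by exact_mod_cast hk
  have hnR : (1 : ℝ) ≤ n := by exact_mod_cast (by omega : 1 ≤ n)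
  rw [show k + n + 1 - k - 1 = n by omega]
  push_cast at hyp ⊢
  rw [show (k : ℝ) + n + 1 - 2 = k + n - 1 by ring] at hyp ⊢
  rw [show (k : ℝ) + n + 1 - k - 1 = n by ring]
  set P := α * ((k : ℝ) + n - 1) + 1
  have hP1 : 1 ≤ P := by nlinarith
  have hweight := beta_div_Gamma_mul_Gamma_mul_Gamma_le hα0 hα1 hkR hnR
  have hpow : 2 ^ n * P ^ (2 * α * n) ≤ A ^ n * s ^ (α * n) :=
    pow_mul_rpow_le_of_mul_rpow_le zero_le_two (by positivity) hs.le hyp n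
  have hA_exp : A ^ (k - 1) * A ^ k * A ^ n * A ^ n = A ^ (2 * (k + n + 1) - 3) := by
    rw [← pow_add, ← pow_add, ← pow_add]
    congr 1
    omega
  have hs_exp : s ^ (α * n) * s ^ (α * ((k : ℝ) + n + 1 + k - 1))
      = s ^ (2 * α * ((k : ℝ) + n + 1 - 1)) := by
    rw [← rpow_add hs]
    ring_nf
  calc _ = A ^ (k - 1) * A ^ k * A ^ n
          * (Gamma (α * (2 * (k : ℝ) - 1) + 1) * Gamma α / Gamma (α * (2 * (k : ℝ) - 1) + 1 + α)
            / (Gamma (α * ((k : ℝ) - 1) + 1) * Gamma (α * k + 1) * Gamma (α * n + 1)))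
          * s ^ (α * ((k : ℝ) + n + 1 + k - 1)) := by ring
    _ ≤ A ^ (k - 1) * A ^ k * A ^ n * (4 * Gamma α * P ^ (2 * α * n) / Gamma P ^ 2)
          * s ^ (α * ((k : ℝ) + n + 1 + k - 1)) := by gcongr
    _ = 4 * Gamma α * (A ^ (k - 1) * A ^ k * A ^ n) / Gamma P ^ 2 / 2 ^ n
          * (2 ^ n * P ^ (2 * α * n)) * s ^ (α * ((k : ℝ) + n + 1 + k - 1)) := by
      field_simp
    _ ≤ 4 * Gamma α * (A ^ (k - 1) * A ^ k * A ^ n) / Gamma P ^ 2 / 2 ^ n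
          * (A ^ n * s ^ (α * n)) * s ^ (α * ((k : ℝ) + n + 1 + k - 1)) := by gcongr
    _ = _ := by
      rw [← hA_exp, ← hs_exp, div_pow, one_pow]
      field_simp

theorem sum_convolution_bound (α : ℝ) (hα : α ∈ Set.Ioo (0:ℝ) 1) :
    ∃ cstar > (0:ℝ), ∀ C > (0:ℝ), ∀ j : ℕ, 3 ≤ j → ∀ s > (0:ℝ),
      2 * (α * ((j : ℝ) - 2) + 1) ^ (2 * α) ≤ C * Real.Gamma (α + 1) * s ^ α →
      ∑ k ∈ Finset.Icc 1 (j - 2),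
          ((C * Real.Gamma (α + 1)) ^ (k - 1) / Real.Gamma (α * ((k : ℝ) - 1) + 1)) *
          ((C * Real.Gamma (α + 1)) ^ k / Real.Gamma (α * (k : ℝ) + 1)) *
          ((C * Real.Gamma (α + 1)) ^ (j - k - 1)
            / Real.Gamma (α * ((j : ℝ) - (k : ℝ) - 1) + 1)) *
          (Real.Gamma (α * (2 * (k : ℝ) - 1) + 1) * Real.Gamma α
            / Real.Gamma (α * (2 * (k : ℝ) - 1) + 1 + α)) *
          s ^ (α * ((j : ℝ) + (k : ℝ) - 1))
        ≤ cstar * (C * Real.Gamma (α + 1)) ^ (2 * j - 3) * s ^ (2 * α * ((j : ℝ) - 1))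
            / (Real.Gamma (α * ((j : ℝ) - 2) + 1)) ^ 2 := by
  obtain ⟨hα0, hα1⟩ := hα
  refine ⟨4 * Real.Gamma α, by positivity, fun C hC j _ s hs hyp => ?_⟩
  have hA : 0 ≤ C * Real.Gamma (α + 1) := by positivity
  calc _ ≤ ∑ k ∈ Finset.Icc 1 (j - 2), 4 * Real.Gamma α * (C * Real.Gamma (α + 1)) ^ (2 * j - 3)
          * s ^ (2 * α * ((j : ℝ) - 1)) / Real.Gamma (α * ((j : ℝ) - 2) + 1) ^ 2
          * (1 / 2) ^ (j - k - 1) := by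
        refine Finset.sum_le_sum fun k hk => ?_
        rw [Finset.mem_Icc] at hk
        exact convolution_term_le hα0 hα1.le hA hs hk.1 (by omega) hyp
    _ ≤ _ := by
        rw [← Finset.mul_sum]
        exact mul_le_of_le_one_right (by positivity) (sum_Icc_one_half_pow_sub_le j)
end
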